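/- Let Φ be an admissible family of Borel probability measures on [0,1], i.e., every ν ∈ Φ and every weak limit of sequences from Φ has empty integral periodic zero set. Then Φ is equi-positive: there exists ε₀ > 0 such that for all x ∈ [0,1] and all ν ∈ Φ, there exists k_{x,ν} ∈ ℤ with |ν̂(x + k_{x,ν})| ≥ ε₀. -/

import Mathlib

open MeasureTheory Filter Topology

/-- Fourier transform of a Borel measure on `ℝ`: `μ̂(ξ) = ∫ e^{-2πiξx} dμ(x)`. -/
noncomputable def FT (μ : Measure ℝ) (ξ : ℝ) : ℂ :=
  ∫ x, Complex.exp (-(2 * (Real.pi : ℂ) * Complex.I) * (ξ : ℂ) * (x : ℂ)) ∂μ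

/-- The integral periodic zero set `Z(μ) = {ξ : μ̂(ξ + k) = 0 for all k ∈ ℤ}`. -/
def Zset (μ : Measure ℝ) : Set ℝ := {ξ : ℝ | ∀ k : ℤ, FT μ (ξ + (k : ℝ)) = 0}

/-- `ρ = (1/2)(δ₀ + δ₁)`. -/
noncomputable def rho : Measure ℝ :=
  (2 : ENNReal)⁻¹ • Measure.dirac (0 : ℝ) + (2 : ENNReal)⁻¹ • Measure.dirac (1 : ℝ)

/-- Weak convergence of a sequence of measures, tested against bounded continuous
functions. -/
def WeakLim (s : ℕ → Measure ℝ) (ν₀ : Measure ℝ) : Prop :=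
  ∀ f : BoundedContinuousFunction ℝ ℝ,
    Tendsto (fun n => ∫ x, f x ∂(s n)) atTop (𝓝 (∫ x, f x ∂ν₀))

open InnerProductSpace ProbabilityTheory BoundedContinuousFunction Set

/-!
If no `ε₀` works, there are `xₙ ∈ [0,1]` and `νₙ ∈ Φ` with `|ν̂ₙ(xₙ + k)| < 1/(n+1)` for all
`k ∈ ℤ`. All `νₙ` live on the compact set `[0,1]`, so by Prokhorov's theorem and compactness
of `[0,1]` a subsequence has `xₙ → x₀` and `νₙ → ν₀` weakly. The transforms of measures on
`[0,1]` are uniformly `2π`-Lipschitz, hence `ν̂ₙ(xₙ + k) → ν̂₀(x₀ + k)`, so `x₀ ∈ Z(ν₀)`,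
contradicting admissibility.
-/

lemma FT_eq_charFun (μ : Measure ℝ) (ξ : ℝ) : FT μ ξ = charFun μ (-(2 * Real.pi * ξ)) := by
  rw [charFun_apply_real, FT]
  congr with x
  push_cast
  ring_nf

lemma norm_charFun_sub_le {E : Type*} [NormedAddCommGroup E] [InnerProductSpace ℝ E]
    [MeasurableSpace E] [BorelSpace E] {μ : Measure E} [IsProbabilityMeasure μ] {R : ℝ}
    (hR : ∀ᵐ x ∂μ, ‖x‖ ≤ R) (s t : E) :
    ‖charFun μ s - charFun μ t‖ ≤ R * ‖s - t‖ := by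
  have hpt : ∀ x : E, ‖Complex.exp (⟪x, s⟫_ℝ * Complex.I) - Complex.exp (⟪x, t⟫_ℝ * Complex.I)‖
      ≤ ‖x‖ * ‖s - t‖ := fun x => by
    have : Complex.exp (⟪x, s⟫_ℝ * Complex.I) - Complex.exp (⟪x, t⟫_ℝ * Complex.I)
        = Complex.exp (⟪x, t⟫_ℝ * Complex.I) * (Complex.exp (Complex.I * ⟪x, s - t⟫_ℝ) - 1) := by
      rw [mul_sub, ← Complex.exp_add, inner_sub_right]; push_cast; ring_nf
    rw [this, norm_mul, Complex.norm_exp_ofReal_mul_I, one_mul]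
    exact Real.norm_exp_I_mul_ofReal_sub_one_le.trans (norm_inner_le_norm x (s - t))
  rw [charFun_eq_integral_innerProbChar, charFun_eq_integral_innerProbChar,
    ← integral_sub ((innerProbChar s).integrable μ) ((innerProbChar t).integrable μ)]
  calc _ ≤ R * ‖s - t‖ * μ.real univ := norm_integral_le_of_norm_le_const <| by
        filter_upwards [hR] with x hx
        exact (hpt x).trans (by gcongr)
    _ = R * ‖s - t‖ := by simp

lemma norm_FT_sub_le {ν : Measure ℝ} [IsProbabilityMeasure ν] {R : ℝ}
    (hR : ∀ᵐ x ∂ν, |x| ≤ R) (a b : ℝ) :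
    ‖FT ν a - FT ν b‖ ≤ 2 * Real.pi * R * |a - b| := by
  rw [FT_eq_charFun, FT_eq_charFun]
  refine (norm_charFun_sub_le hR _ _).trans_eq ?_
  rw [Real.norm_eq_abs, ← neg_sub', abs_neg, ← mul_sub, abs_mul,
    abs_of_pos (by positivity : 0 < 2 * Real.pi)]
  ring

lemma tendsto_FT_of_tendsto {ι : Type*} {l : Filter ι} {μ : ι → ProbabilityMeasure ℝ}
    {μ₀ : ProbabilityMeasure ℝ} (hμ : Tendsto μ l (𝓝 μ₀)) (ξ : ℝ) :
    Tendsto (fun i => FT (μ i) ξ) l (𝓝 (FT μ₀ ξ)) := by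
  simp_rw [FT_eq_charFun, charFun_eq_integral_innerProbChar]
  exact (ProbabilityMeasure.tendsto_iff_forall_integral_rclike_tendsto ℂ).1 hμ _

lemma tendsto_FT_of_tendsto_of_tendsto {ι : Type*} {l : Filter ι} {μ : ι → ProbabilityMeasure ℝ}
    {μ₀ : ProbabilityMeasure ℝ} {ξ : ι → ℝ} {ξ₀ R : ℝ}
    (hR : ∀ i, ∀ᵐ x ∂(μ i : Measure ℝ), |x| ≤ R)
    (hμ : Tendsto μ l (𝓝 μ₀)) (hξ : Tendsto ξ l (𝓝 ξ₀)) :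
    Tendsto (fun i => FT (μ i) (ξ i)) l (𝓝 (FT μ₀ ξ₀)) := by
  have hdiff : Tendsto (fun i => FT (μ i) (ξ i) - FT (μ i) ξ₀) l (𝓝 0) := by
    refine squeeze_zero_norm (fun i => norm_FT_sub_le (hR i) _ _) ?_
    simpa using (hξ.sub_const ξ₀).abs.const_mul (2 * Real.pi * R)
  simpa using hdiff.add (tendsto_FT_of_tendsto hμ ξ₀)

lemma weakLim_of_tendsto {μ : ℕ → ProbabilityMeasure ℝ} {μ₀ : ProbabilityMeasure ℝ}
    (hμ : Tendsto μ atTop (𝓝 μ₀)) : WeakLim (fun n => μ n) μ₀ :=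
  ProbabilityMeasure.tendsto_iff_forall_integral_tendsto.1 hμ

lemma isCompact_closure_of_measure_compl_eq_zero {E : Type*} [MeasurableSpace E]
    [TopologicalSpace E] [T2Space E] [BorelSpace E] {S : Set (ProbabilityMeasure E)} {K : Set E}
    (hK : IsCompact K) (hS : ∀ μ ∈ S, (μ : Measure E) Kᶜ = 0) :
    IsCompact (closure S) := by
  refine isCompact_closure_of_isTightMeasureSet ?_
  rw [isTightMeasureSet_iff_exists_isCompact_measure_compl_le]
  rintro ε -
  refine ⟨K, hK, ?_⟩
  rintro _ ⟨μ, hμ, rfl⟩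
  simp [hS μ hμ]

lemma ae_abs_le_one_of_measure_compl_Icc {ν : Measure ℝ} (hν : ν (Icc (0 : ℝ) 1)ᶜ = 0) :
    ∀ᵐ x ∂ν, |x| ≤ 1 := by
  filter_upwards [measure_eq_zero_iff_ae_notMem.1 hν] with x hx
  rw [notMem_compl_iff] at hx
  exact abs_le.2 ⟨by linarith [hx.1], hx.2⟩

theorem stmt5_general (Φ : Set (Measure ℝ))
    (hprob : ∀ ν ∈ Φ, IsProbabilityMeasure ν)
    (hsupp : ∀ ν ∈ Φ, ν (Set.Icc (0 : ℝ) 1)ᶜ = 0)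
    (hZlim : ∀ ν₀ : Measure ℝ, IsProbabilityMeasure ν₀ →
      (∃ s : ℕ → Measure ℝ, (∀ n, s n ∈ Φ) ∧ WeakLim s ν₀) → Zset ν₀ = ∅) :
    ∃ ε₀ > (0 : ℝ), ∀ x ∈ Set.Icc (0 : ℝ) 1, ∀ ν ∈ Φ,
      ∃ k : ℤ, ε₀ ≤ ‖FT ν (x + (k : ℝ))‖ := by
  by_contra! hbad
  set S : Set (ProbabilityMeasure ℝ) := {μ | (μ : Measure ℝ) ∈ Φ}
  have hsmall (n : ℕ) : ∃ p ∈ Icc (0 : ℝ) 1 ×ˢ S,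
      ∀ k : ℤ, ‖FT p.2 (p.1 + k)‖ < 1 / ((n : ℝ) + 1) := by
    obtain ⟨x, hx, ν, hν, hk⟩ := hbad _ Nat.one_div_pos_of_nat
    exact ⟨(x, ⟨ν, hprob ν hν⟩), ⟨hx, hν⟩, hk⟩
  choose p hpS hp using hsmall
  obtain ⟨⟨x₀, ν₀⟩, -, ψ, hψ, hlim⟩ :=
    (isCompact_Icc.prod (isCompact_closure_of_measure_compl_eq_zero isCompact_Icc
      fun μ hμ => hsupp _ hμ)).tendsto_subseq
      fun n => ⟨(hpS n).1, subset_closure (hpS n).2⟩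
  have hZ₀ : Zset ν₀ = ∅ := hZlim ν₀ inferInstance
    ⟨_, fun n => (hpS (ψ n)).2, weakLim_of_tendsto hlim.snd_nhds⟩
  have hx₀ : x₀ ∈ Zset ν₀ := fun k => by
    refine tendsto_nhds_unique (l := atTop)
      (f := fun n => FT (p (ψ n)).2 ((p (ψ n)).1 + k)) ?_ ?_
    · exact tendsto_FT_of_tendsto_of_tendsto
        (fun n => ae_abs_le_one_of_measure_compl_Icc (hsupp _ (hpS (ψ n)).2))
        hlim.snd_nhds (hlim.fst_nhds.add_const (k : ℝ))
    · exact squeeze_zero_norm (fun n => (hp (ψ n) k).le)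
        (tendsto_one_div_add_atTop_nhds_zero_nat.comp hψ.tendsto_atTop)
  rw [hZ₀] at hx₀
  exact hx₀

/-- An admissible family of probability measures on `[0,1]` (all members and all weak
limits of its sequences have empty integral periodic zero set) is equi-positive:
there is `ε₀ > 0` such that for all `x ∈ [0,1]` and all `ν ∈ Φ` there is `k ∈ ℤ` with
`|ν̂(x+k)| ≥ ε₀`. -/
theorem stmt5 (Φ : Set (Measure ℝ))
    (hprob : ∀ ν ∈ Φ, IsProbabilityMeasure ν)
    (hsupp : ∀ ν ∈ Φ, ν (Set.Icc (0 : ℝ) 1)ᶜ = 0)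
    (hZ : ∀ ν ∈ Φ, Zset ν = ∅)
    (hZlim : ∀ ν₀ : Measure ℝ, IsProbabilityMeasure ν₀ →
      (∃ s : ℕ → Measure ℝ, (∀ n, s n ∈ Φ) ∧ WeakLim s ν₀) → Zset ν₀ = ∅) :
    ∃ ε₀ > (0 : ℝ), ∀ x ∈ Set.Icc (0 : ℝ) 1, ∀ ν ∈ Φ,
      ∃ k : ℤ, ε₀ ≤ ‖FT ν (x + (k : ℝ))‖ :=
  stmt5_general Φ hprob hsupp hZlim
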